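/- arXiv:2305.16737 — 3 statements merged into one kernel-verified Lean document; each statement's English description precedes it below -/
import Mathlib

section
/- Let r ∈ ℕ, let τ ∈ ℝ with τ ≠ 0, let L ∈ ℝ, and let 0 ≤ a₀ < a₁ < ⋯ < a_r ≤ 1 be interpolation nodes that are symmetrically distributed, i.e. a_j = 1 − a_{r−j} for all 0 ≤ j ≤ r. Let P be the unique polynomial over ℂ of degree ≤ r satisfying P(a_j τ) = exp(i a_j τ L) for all j, and let Q be the unique polynomial over ℂ of degree ≤ r satisfying Q(−a_j τ) = exp(−i a_j τ L) for all j (Q is the interpolant obtained from the same construction with τ replaced by −τ). Then for every s ∈ ℂ one has Q(s − τ) = exp(−i τ L) · P(s). -/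
/-- If the interpolation nodes `a 0 < a 1 < ⋯ < a r` in `[0,1]` are symmetrically
distributed (`a j = 1 - a (rev j)`), `P` is the (unique) polynomial of degree `≤ r`
interpolating `ξ ↦ exp(i ξ L)` at the nodes `a j * τ`, and `Q` is the (unique)
polynomial of degree `≤ r` interpolating at the nodes `-(a j * τ)` (the interpolant
obtained with `τ` replaced by `-τ`), then `Q (s - τ) = exp(-iτL) * P s` for all `s`. -/
theorem symmetric_interpolation (r : ℕ) (τ L : ℝ) (hτ : τ ≠ 0)
    (a : Fin (r + 1) → ℝ) (ha : StrictMono a)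
    (h0 : 0 ≤ a 0) (h1 : a (Fin.last r) ≤ 1)
    (hsym : ∀ j : Fin (r + 1), a j = 1 - a (Fin.rev j))
    (P Q : Polynomial ℂ)
    (hPdeg : P.degree ≤ (r : ℕ)) (hQdeg : Q.degree ≤ (r : ℕ))
    (hP : ∀ j : Fin (r + 1),
      P.eval ((a j : ℂ) * (τ : ℂ)) = Complex.exp (Complex.I * (a j : ℂ) * (τ : ℂ) * (L : ℂ)))
    (hQ : ∀ j : Fin (r + 1),
      Q.eval (-((a j : ℂ) * (τ : ℂ))) = Complex.exp (-(Complex.I * (a j : ℂ) * (τ : ℂ) * (L : ℂ))))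
    (s : ℂ) :
    Q.eval (s - (τ : ℂ)) = Complex.exp (-(Complex.I * (τ : ℂ) * (L : ℂ))) * P.eval s := by
  set c : ℂ := Complex.exp (-(Complex.I * (τ : ℂ) * (L : ℂ))) with hc
  set R : Polynomial ℂ :=
    Q.comp (Polynomial.X - Polynomial.C (τ : ℂ)) - Polynomial.C c * P with hR
  have hQn : Q.natDegree ≤ r := Polynomial.natDegree_le_iff_degree_le.mpr hQdeg
  have hPn : P.natDegree ≤ r := Polynomial.natDegree_le_iff_degree_le.mpr hPdeg
  have hRdeg : R.natDegree < r + 1 := by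
    have h1 : (Q.comp (Polynomial.X - Polynomial.C (τ : ℂ))).natDegree ≤ r := by
      rw [Polynomial.natDegree_comp, Polynomial.natDegree_X_sub_C, mul_one]
      exact hQn
    have h2 : (Polynomial.C c * P).natDegree ≤ r :=
      le_trans (Polynomial.natDegree_C_mul_le _ _) hPn
    exact lt_of_le_of_lt (le_trans (Polynomial.natDegree_sub_le _ _) (max_le h1 h2))
      (Nat.lt_succ_self r)
  have hfinj : Function.Injective (fun j : Fin (r + 1) => (a j : ℂ) * (τ : ℂ)) := by
    intro i j hij
    have : (a i : ℂ) = (a j : ℂ) := by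
      simp only [mul_eq_mul_right_iff] at hij
      rcases hij with h | h
      · exact_mod_cast h
      · exact absurd (by exact_mod_cast h) hτ
    exact ha.injective (by exact_mod_cast this)
  have heval : ∀ j : Fin (r + 1), R.eval ((a j : ℂ) * (τ : ℂ)) = 0 := by
    intro j
    have hrev : (a (Fin.rev j) : ℝ) = 1 - a j := by
      have := hsym (Fin.rev j)
      rw [Fin.rev_rev] at this
      linarith
    have key : (a j : ℂ) * (τ : ℂ) - (τ : ℂ) = -((a (Fin.rev j) : ℂ) * (τ : ℂ)) := by
      have : (a (Fin.rev j) : ℂ) = 1 - (a j : ℂ) := by exact_mod_cast hrev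
      rw [this]; ring
    simp only [hR, Polynomial.eval_sub, Polynomial.eval_comp, Polynomial.eval_X,
      Polynomial.eval_C, Polynomial.eval_mul]
    rw [key, hQ (Fin.rev j), hP j, hc, ← Complex.exp_add]
    have : (a (Fin.rev j) : ℂ) = 1 - (a j : ℂ) := by exact_mod_cast hrev
    rw [this]
    ring_nf
  have hR0 : R = 0 := by
    apply Polynomial.eq_zero_of_natDegree_lt_card_of_eval_eq_zero R hfinj heval
    simpa using hRdeg
  have := congrArg (Polynomial.eval s) hR0
  simp only [hR, Polynomial.eval_sub, Polynomial.eval_comp, Polynomial.eval_X,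
    Polynomial.eval_C, Polynomial.eval_mul, Polynomial.eval_zero, sub_eq_zero] at this
  exact this
end

section
/- For τ ∈ ℝ and finitely supported v, w : ℤ^d → ℂ, let R_τ(v, w) denote the relation: for every k ∈ ℤ^d, w_k = e^{−iτ|k|²} v_k − i(τ/2) e^{−iτ|k|²} Σ_{−k₁+k₂+k₃=k} φ₁(2iτ|k₁|²) · conj(v_{k₁}) v_{k₂} v_{k₃} − i(τ/2) Σ_{−k₁+k₂+k₃=k} φ₁(−2iτ|k₁|²) · conj(w_{k₁}) w_{k₂} w_{k₃}. Then the one-step relation R is symmetric: for all τ ∈ ℝ and all finitely supported v, w : ℤ^d → ℂ, R_τ(v, w) holds if and only if R_{−τ}(w, v) holds. -/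
/-- `φ₁(z) = (exp z - 1)/z` for `z ≠ 0`, `φ₁(0) = 1`. -/
noncomputable def phi1 (z : ℂ) : ℂ := if z = 0 then 1 else (Complex.exp z - 1) / z

/-- `|k|² = k·k` for a frequency `k ∈ ℤ^d`, as a complex number. -/
noncomputable def nsq {d : ℕ} (k : Fin d → ℤ) : ℂ := ∑ i, ((k i : ℂ)) ^ 2

/-- One step of the symmetrised first-order low-regularity integrator for the cubic
nonlinear Schrödinger equation on `𝕋^d`, in Fourier coordinates: `nlsSym1R τ v w`
holds iff for every `k ∈ ℤ^d`,
`w_k = e^{-iτ|k|²} v_k - i(τ/2) e^{-iτ|k|²} Σ_{-k₁+k₂+k₃=k} φ₁(2iτ|k₁|²) conj(v_{k₁}) v_{k₂} v_{k₃}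
      - i(τ/2) Σ_{-k₁+k₂+k₃=k} φ₁(-2iτ|k₁|²) conj(w_{k₁}) w_{k₂} w_{k₃}`,
where the convolution constraint `-k₁+k₂+k₃ = k` has been solved as `k₃ = k + k₁ - k₂`. -/
noncomputable def nlsSym1R {d : ℕ} (τ : ℝ) (v w : (Fin d → ℤ) →₀ ℂ) : Prop :=
  ∀ k : Fin d → ℤ,
    w k = Complex.exp (-(Complex.I * (τ : ℂ) * nsq k)) * v k
      - Complex.I * ((τ : ℂ) / 2) * Complex.exp (-(Complex.I * (τ : ℂ) * nsq k)) *
          (∑ᶠ k₁ : Fin d → ℤ, ∑ᶠ k₂ : Fin d → ℤ,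
            phi1 (2 * Complex.I * (τ : ℂ) * nsq k₁) *
              ((starRingEnd ℂ) (v k₁) * v k₂ * v (k + k₁ - k₂)))
      - Complex.I * ((τ : ℂ) / 2) *
          (∑ᶠ k₁ : Fin d → ℤ, ∑ᶠ k₂ : Fin d → ℤ,
            phi1 (-(2 * Complex.I * (τ : ℂ) * nsq k₁)) *
              ((starRingEnd ℂ) (w k₁) * w k₂ * w (k + k₁ - k₂)))

/-! Writing `E = e^{-iτ|k|²}`, `c = iτ/2` and `N_τ(u)_k` for the cubic convolution sum weighted by
`φ₁(2iτ|k₁|²)`, the relation `R_τ(v, w)` reads `w = E (v - c N_τ(v)) - c N_{-τ}(w)`. Replacing `τ` by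
`-τ` inverts `E`, negates `c` and swaps `N_τ` with `N_{-τ}`, so `R_{-τ}(w, v)` is the same equation
multiplied by `E⁻¹` and solved for `v`. -/

theorem eq_mul_sub_sub_iff_of_mul_eq_one {R : Type*} [CommRing R] {a b c e e' x y : R}
    (he : e * e' = 1) :
    b = e * (a - c * x) - c * y ↔ a = e' * (b - -c * y) - -c * x := by
  constructor <;> rintro rfl
  · linear_combination (c * x - a) * he
  · linear_combination (-b - c * y) * he

noncomputable def nlsNonlinearity {d : ℕ} (τ : ℝ) (u : (Fin d → ℤ) →₀ ℂ) (k : Fin d → ℤ) : ℂ :=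
  ∑ᶠ k₁ : Fin d → ℤ, ∑ᶠ k₂ : Fin d → ℤ,
    phi1 (2 * Complex.I * (τ : ℂ) * nsq k₁) * ((starRingEnd ℂ) (u k₁) * u k₂ * u (k + k₁ - k₂))

theorem nlsSym1R_iff {d : ℕ} (τ : ℝ) (v w : (Fin d → ℤ) →₀ ℂ) :
    nlsSym1R τ v w ↔ ∀ k, w k =
      Complex.exp (-(Complex.I * (τ : ℂ) * nsq k)) *
          (v k - Complex.I * ((τ : ℂ) / 2) * nlsNonlinearity τ v k)
        - Complex.I * ((τ : ℂ) / 2) * nlsNonlinearity (-τ) w k := by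
  have hphi (k₁ : Fin d → ℤ) :
      2 * Complex.I * ((-τ : ℝ) : ℂ) * nsq k₁ = -(2 * Complex.I * (τ : ℂ) * nsq k₁) := by
    push_cast; ring
  refine forall_congr' fun k => ?_
  simp only [nlsNonlinearity, hphi]
  ring_nf

/-- The one-step relation of the symmetrised first-order low-regularity NLS integrator
is symmetric: `R_τ(v, w)` holds iff `R_{-τ}(w, v)` holds. -/
theorem nlsSym1R_symmetric {d : ℕ} (τ : ℝ) (v w : (Fin d → ℤ) →₀ ℂ) :
    nlsSym1R τ v w ↔ nlsSym1R (-τ) w v := by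
  have hcoeff : Complex.I * (((-τ : ℝ) : ℂ) / 2) = -(Complex.I * ((τ : ℂ) / 2)) := by
    push_cast; ring
  have hphase (k : Fin d → ℤ) :
      Complex.exp (-(Complex.I * (τ : ℂ) * nsq k)) *
        Complex.exp (-(Complex.I * ((-τ : ℝ) : ℂ) * nsq k)) = 1 := by
    rw [← Complex.exp_add, ← Complex.exp_zero]
    push_cast
    ring_nf
  simp only [nlsSym1R_iff, neg_neg, hcoeff]
  exact forall_congr' fun k => eq_mul_sub_sub_iff_of_mul_eq_one (hphase k)
end

section
/- For τ ∈ ℝ and finitely supported v, w : ℤ → ℂ with v_0 = 0 and w_0 = 0, let R_τ(v, w) denote the relation: for every k ∈ ℤ, w_k = e^{−iτk³} v_k + (1/24) Σ_{k₁+k₂=k, k₁≠0, k₂≠0} ((e^{−iτk₁³} v_{k₁} + w_{k₁})/(i k₁)) · ((e^{−iτk₂³} v_{k₂} + w_{k₂})/(i k₂)) − (1/24) e^{−iτk³} Σ_{k₁+k₂=k, k₁≠0, k₂≠0} ((v_{k₁} + e^{iτk₁³} w_{k₁})/(i k₁)) · ((v_{k₂} + e^{iτk₂³} w_{k₂})/(i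 k₂)). Then R is symmetric: for all τ ∈ ℝ and all such v, w, R_τ(v, w) holds if and only if R_{−τ}(w, v) holds. -/
/-- One step of the first-order resonance-based midpoint scheme for the Korteweg–de
Vries equation on `𝕋`, in Fourier coordinates: `kdvMidR τ v w` holds iff for every
`k ∈ ℤ`,
`w_k = e^{-iτk³} v_k
  + (1/24) Σ_{k₁+k₂=k, k₁≠0, k₂≠0} ((e^{-iτk₁³} v_{k₁} + w_{k₁})/(ik₁)) ((e^{-iτk₂³} v_{k₂} + w_{k₂})/(ik₂))
  - (1/24) e^{-iτk³} Σ_{k₁+k₂=k, k₁≠0, k₂≠0} ((v_{k₁} + e^{iτk₁³} w_{k₁})/(ik₁)) ((v_{k₂} + e^{iτk₂³} w_{k₂})/(ik₂))`,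
where the convolution constraint `k₁+k₂ = k` has been solved as `k₂ = k - k₁`. -/
noncomputable def kdvMidR (τ : ℝ) (v w : ℤ →₀ ℂ) : Prop :=
  ∀ k : ℤ,
    w k = Complex.exp (-(Complex.I * (τ : ℂ) * (k : ℂ) ^ 3)) * v k
      + (1 / 24 : ℂ) *
          (∑ᶠ k₁ : ℤ, if k₁ ≠ 0 ∧ k - k₁ ≠ 0 then
            ((Complex.exp (-(Complex.I * (τ : ℂ) * (k₁ : ℂ) ^ 3)) * v k₁ + w k₁) /
                (Complex.I * (k₁ : ℂ))) *
              ((Complex.exp (-(Complex.I * (τ : ℂ) * ((k - k₁ : ℤ) : ℂ) ^ 3)) * v (k - k₁) +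
                  w (k - k₁)) / (Complex.I * ((k - k₁ : ℤ) : ℂ)))
            else 0)
      - (1 / 24 : ℂ) * Complex.exp (-(Complex.I * (τ : ℂ) * (k : ℂ) ^ 3)) *
          (∑ᶠ k₁ : ℤ, if k₁ ≠ 0 ∧ k - k₁ ≠ 0 then
            ((v k₁ + Complex.exp (Complex.I * (τ : ℂ) * (k₁ : ℂ) ^ 3) * w k₁) /
                (Complex.I * (k₁ : ℂ))) *
              ((v (k - k₁) +
                  Complex.exp (Complex.I * (τ : ℂ) * ((k - k₁ : ℤ) : ℂ) ^ 3) * w (k - k₁)) /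
                (Complex.I * ((k - k₁ : ℤ) : ℂ)))
            else 0)



/-! Replacing `τ` by `-τ` and exchanging `v` and `w` exchanges the two convolution sums of the
scheme: they are the Fourier coefficients of `(∂⁻¹(e^{-τ∂³}v + w))²` and of
`(∂⁻¹(v + e^{τ∂³}w))²`. The relation for `(-τ, w, v)` is therefore the relation for `(τ, v, w)`
solved for `v`, which is possible because `e^{-iτk³} e^{iτk³} = 1`. -/

open Complex

theorem eq_mul_add_sub_iff_swap_of_mul_eq_one {R : Type*} [CommRing R] {E E' : R}
    (hE : E * E' = 1) (a b c s t : R) :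
    a = E * b + c * s - c * E * t ↔ b = E' * a + c * t - c * E' * s := by
  constructor <;> intro h
  · linear_combination (-E') * h + (c * t - b) * hE
  · linear_combination (-E) * h + (c * s - a) * hE

/-- Fourier multiplier of the free Airy flow `e^{-τ∂ₓ³}`. -/
noncomputable def airyMultiplier (τ : ℝ) (k : ℤ) : ℂ :=
  exp (-(I * τ * k ^ 3))

theorem airyMultiplier_neg (τ : ℝ) (k : ℤ) :
    airyMultiplier (-τ) k = exp (I * τ * k ^ 3) := by
  simp [airyMultiplier]

theorem airyMultiplier_mul_airyMultiplier_neg (τ : ℝ) (k : ℤ) :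
    airyMultiplier τ k * airyMultiplier (-τ) k = 1 := by
  rw [airyMultiplier_neg, airyMultiplier, ← exp_add, neg_add_cancel, exp_zero]

/-- Fourier coefficients of `(∂ₓ⁻¹ f)²` for a zero-mean `f`. -/
noncomputable def antiderivSq (f : ℤ → ℂ) (k : ℤ) : ℂ :=
  ∑ᶠ k₁ : ℤ, if k₁ ≠ 0 ∧ k - k₁ ≠ 0 then
    f k₁ / (I * k₁) * (f (k - k₁) / (I * ((k - k₁ : ℤ) : ℂ))) else 0

theorem kdvMidR_iff (τ : ℝ) (v w : ℤ →₀ ℂ) :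
    kdvMidR τ v w ↔ ∀ k : ℤ,
      w k = airyMultiplier τ k * v k
        + 1 / 24 * antiderivSq (fun j ↦ airyMultiplier τ j * v j + w j) k
        - 1 / 24 * airyMultiplier τ k *
            antiderivSq (fun j ↦ v j + airyMultiplier (-τ) j * w j) k := by
  simp only [airyMultiplier_neg]
  rfl

theorem kdvMidR_symmetric_general (τ : ℝ) (v w : ℤ →₀ ℂ) :
    kdvMidR τ v w ↔ kdvMidR (-τ) w v := by
  have swap_summands : (fun j ↦ airyMultiplier (-τ) j * w j + v j) =
      fun j ↦ v j + airyMultiplier (-τ) j * w j := funext fun j ↦ add_comm _ _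
  have swap_summands' : (fun j ↦ w j + airyMultiplier (- -τ) j * v j) =
      fun j ↦ airyMultiplier τ j * v j + w j := funext fun j ↦ by rw [neg_neg, add_comm]
  rw [kdvMidR_iff, kdvMidR_iff, swap_summands, swap_summands']
  exact forall_congr' fun k ↦
    eq_mul_add_sub_iff_swap_of_mul_eq_one (airyMultiplier_mul_airyMultiplier_neg τ k) ..

/-- The one-step relation of the first-order resonance-based midpoint KdV scheme is
symmetric on zero-mean data: `R_τ(v, w)` holds iff `R_{-τ}(w, v)` holds. -/
theorem kdvMidR_symmetric (τ : ℝ) (v w : ℤ →₀ ℂ) (hv : v 0 = 0) (hw : w 0 = 0) :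
    kdvMidR τ v w ↔ kdvMidR (-τ) w v :=
  kdvMidR_symmetric_general τ v w
end
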